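/- Let N ≥ 1 be an integer, h > 0, α ≥ 0, Δt ≥ 0 with α·Δt/h ≤ 1, and let (ū_j, v̄_j)_{j∈ℤ} and (ū^e_j, v̄^e_j)_{j∈ℤ} be two sets of N-periodic real data. Suppose: (i) M = max_{1≤j≤N}|ū_j − ū_Ω| ≥ c₀ for some c₀ > 0; (ii) |ū_j − ū^e_j| ≤ δ_u and |v̄_j − v̄^e_j| ≤ δ_v for all j, with δ_u, δ_v ≥ 0; and (iii) for every index i, |J0_{i+1/2}(ū^e, v̄^e)| + h·|J1_{i+1/2}(ū^e, v̄^e)| ≤ J, where J0 and J1 are the jump functionals of the context evaluated at the exact data. Then, with σ̂_i and v̄^σ_i defined as in the context (from the data (ū_j, v̄_j)), for every index i one has |v̄^σ_i − v̄_i| ≤ (2·|v̄_i|/c₀)·(J + 12·(δ_u + δ_v)). In particular, if δ_u, δ_v and J are all O(h^6) and |v̄_i| and 1/c₀ are bounded, the OE procedure introduces only an O(h^6) modification and hence maintains the sixth-order accuracy of the HWENO scheme. -/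

import Mathlib

/-- The jump functional `J0_{i+1/2}` of the reconstructed values across the interface
`x_{i+1/2}` (formula (eq:jump1) of the paper). -/
noncomputable def J0 (ub vb : ℤ → ℝ) (i : ℤ) : ℝ :=
  (-13 * ub (i - 1) - 31 * ub i + 31 * ub (i + 1) + 13 * ub (i + 2)
    - 50 * vb (i - 1) - 370 * vb i - 370 * vb (i + 1) - 50 * vb (i + 2)) / 108

/-- The jump functional `J1_{i+1/2}` of the derivative of the reconstruction across the
interface `x_{i+1/2}`. -/
noncomputable def J1 (h : ℝ) (ub vb : ℤ → ℝ) (i : ℤ) : ℝ :=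
  (-5 * ub (i - 1) + 5 * ub i + 5 * ub (i + 1) - 5 * ub (i + 2)
    - 22 * vb (i - 1) - 54 * vb i + 54 * vb (i + 1) + 22 * vb (i + 2)) / (36 * h)

/-- The global average `ū_Ω = (1/N) Σ_{j=1}^N ū_j` of the cell averages. -/
noncomputable def uOmega (N : ℕ) (ub : ℤ → ℝ) : ℝ :=
  (1 / (N : ℝ)) * ∑ j ∈ Finset.Icc (1 : ℤ) (N : ℤ), ub j

/-- The global deviation `M = max_{1 ≤ j ≤ N} |ū_j - ū_Ω|`. -/
noncomputable def Mmax (N : ℕ) (hN : 1 ≤ N) (ub : ℤ → ℝ) : ℝ :=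
  (Finset.Icc (1 : ℤ) (N : ℤ)).sup'
    (Finset.nonempty_Icc.mpr (by exact_mod_cast hN))
    (fun j => |ub j - uOmega N ub|)

/-- The scale-invariant damping coefficient `σ̂_i` of the OE procedure
(formula (sec3:sigma_1d) of the paper). -/
noncomputable def sigmaHat (N : ℕ) (hN : 1 ≤ N) (h : ℝ) (ub vb : ℤ → ℝ) (i : ℤ) : ℝ :=
  if Mmax N hN ub = 0 then 0
  else (|J0 ub vb (i - 1)| + |J0 ub vb i|
    + h * |J1 h ub vb (i - 1)| + h * |J1 h ub vb i|) / Mmax N hN ub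

/-- The zeroth-order moment after the OE procedure: the cell average is unchanged. -/
noncomputable def uSigma (ub : ℤ → ℝ) (i : ℤ) : ℝ := ub i

/-- The first-order moment after the OE procedure:
`v̄^σ_i = v̄_i · exp(-(αΔt/h)·σ̂_i)` (Theorem 2.1 of the paper). -/
noncomputable def vSigma (N : ℕ) (hN : 1 ≤ N) (h α Δt : ℝ) (ub vb : ℤ → ℝ) (i : ℤ) : ℝ :=
  vb i * Real.exp (-(α * Δt / h) * sigmaHat N hN h ub vb i)

lemma aux_div36 (h C B : ℝ) (hh : 0 < h) (hC : |C| ≤ B) :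
    h * (|C| / (36 * h)) ≤ B / 36 := by
  rw [show h * (|C| / (36 * h)) = |C| / 36 by field_simp]
  linarith

/-- **Theorem 2.2 of the paper (the OE procedure maintains accuracy), quantitative
form**: if the data `(ū_j, v̄_j)` approximate the exact moments `(ū^e_j, v̄^e_j)` to
within `δ_u, δ_v` componentwise, the exact interface jumps are bounded by `J`, and the
global deviation `M` is bounded below by `c₀ > 0`, then under the CFL condition the OE
modification of each first-order moment is bounded by
`(2|v̄_i|/c₀)·(J + 12(δ_u + δ_v))`. -/
theorem oe_maintains_accuracy
    (N : ℕ) (hN : 1 ≤ N) (h α Δt : ℝ)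
    (hh : 0 < h) (hα : 0 ≤ α) (hΔt : 0 ≤ Δt) (hcfl : α * Δt / h ≤ 1)
    (ub vb ube vbe : ℤ → ℝ)
    (hper : ∀ j : ℤ, ub (j + N) = ub j ∧ vb (j + N) = vb j)
    (hpere : ∀ j : ℤ, ube (j + N) = ube j ∧ vbe (j + N) = vbe j)
    (c₀ δu δv J : ℝ) (hc₀ : 0 < c₀) (hM : c₀ ≤ Mmax N hN ub)
    (hδu : 0 ≤ δu) (hδv : 0 ≤ δv)
    (herr : ∀ j : ℤ, |ub j - ube j| ≤ δu ∧ |vb j - vbe j| ≤ δv)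
    (hJ : ∀ i : ℤ, |J0 ube vbe i| + h * |J1 h ube vbe i| ≤ J) :
    ∀ i : ℤ, |vSigma N hN h α Δt ub vb i - vb i| ≤
      (2 * |vb i| / c₀) * (J + 12 * (δu + δv)) := by
  intro i
  have hMpos : 0 < Mmax N hN ub := lt_of_lt_of_le hc₀ hM
  have hJnn : 0 ≤ J := le_trans (by positivity) (hJ 0)
  have key : ∀ k : ℤ, |J0 ub vb k| + h * |J1 h ub vb k| ≤ J + 12 * (δu + δv) := by
    intro k
    obtain ⟨hu1, hv1⟩ := herr (k - 1)
    obtain ⟨hu2, hv2⟩ := herr k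
    obtain ⟨hu3, hv3⟩ := herr (k + 1)
    obtain ⟨hu4, hv4⟩ := herr (k + 2)
    have hJk := hJ k
    have d0 : |J0 ub vb k - J0 ube vbe k| ≤ (88 * δu + 840 * δv) / 108 := by
      rw [abs_le] at hu1 hv1 hu2 hv2 hu3 hv3 hu4 hv4
      rw [abs_le]
      unfold J0
      constructor <;> linarith
    have d1 : h * |J1 h ub vb k - J1 h ube vbe k| ≤ (20 * δu + 152 * δv) / 36 := by
      have hC : J1 h ub vb k - J1 h ube vbe k =
          (-5 * (ub (k-1) - ube (k-1)) + 5 * (ub k - ube k) + 5 * (ub (k+1) - ube (k+1))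
            - 5 * (ub (k+2) - ube (k+2)) - 22 * (vb (k-1) - vbe (k-1))
            - 54 * (vb k - vbe k) + 54 * (vb (k+1) - vbe (k+1))
            + 22 * (vb (k+2) - vbe (k+2))) / (36 * h) := by
        unfold J1; ring
      rw [hC, abs_div, abs_of_pos (by positivity : (0:ℝ) < 36 * h)]
      have hCb : |(-5 * (ub (k-1) - ube (k-1)) + 5 * (ub k - ube k) + 5 * (ub (k+1) - ube (k+1))
            - 5 * (ub (k+2) - ube (k+2)) - 22 * (vb (k-1) - vbe (k-1))
            - 54 * (vb k - vbe k) + 54 * (vb (k+1) - vbe (k+1))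
            + 22 * (vb (k+2) - vbe (k+2)))| ≤ 20 * δu + 152 * δv := by
        rw [abs_le] at hu1 hv1 hu2 hv2 hu3 hv3 hu4 hv4
        rw [abs_le]
        constructor <;> linarith
      exact aux_div36 h _ _ hh hCb
    have t0 : |J0 ub vb k| ≤ |J0 ube vbe k| + (88 * δu + 840 * δv) / 108 := by
      have := abs_sub_abs_le_abs_sub (J0 ub vb k) (J0 ube vbe k)
      linarith
    have t1 : h * |J1 h ub vb k| ≤ h * |J1 h ube vbe k| + (20 * δu + 152 * δv) / 36 := by
      have h2 := mul_le_mul_of_nonneg_left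
        (abs_sub_abs_le_abs_sub (J1 h ub vb k) (J1 h ube vbe k)) hh.le
      rw [mul_sub] at h2
      linarith
    linarith
  have hσnn : 0 ≤ sigmaHat N hN h ub vb i := by
    unfold sigmaHat
    split
    · exact le_rfl
    · exact div_nonneg (by positivity) hMpos.le
  have hσ : sigmaHat N hN h ub vb i ≤ 2 * (J + 12 * (δu + δv)) / c₀ := by
    unfold sigmaHat
    rw [if_neg (ne_of_gt hMpos)]
    have hnum : |J0 ub vb (i - 1)| + |J0 ub vb i|
        + h * |J1 h ub vb (i - 1)| + h * |J1 h ub vb i| ≤ 2 * (J + 12 * (δu + δv)) := by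
      have := key (i - 1); have := key i; linarith
    exact div_le_div₀ (by positivity) hnum hc₀ hM
  set x : ℝ := (α * Δt / h) * sigmaHat N hN h ub vb i with hxdef
  have hxnn : 0 ≤ x := mul_nonneg (by positivity) hσnn
  have hxσ : x ≤ sigmaHat N hN h ub vb i := mul_le_of_le_one_left hσnn hcfl
  have hexp : |Real.exp (-x) - 1| ≤ x := by
    have h1 : Real.exp (-x) ≤ 1 := Real.exp_le_one_iff.mpr (by linarith)
    have h2 : 1 - x ≤ Real.exp (-x) := by
      have := Real.add_one_le_exp (-x); linarith
    rw [abs_of_nonpos (by linarith)]; linarith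
  have hvs : vSigma N hN h α Δt ub vb i - vb i = vb i * (Real.exp (-x) - 1) := by
    unfold vSigma
    rw [hxdef]; ring_nf
  rw [hvs, abs_mul]
  calc |vb i| * |Real.exp (-x) - 1| ≤ |vb i| * x :=
        mul_le_mul_of_nonneg_left hexp (abs_nonneg _)
    _ ≤ |vb i| * (2 * (J + 12 * (δu + δv)) / c₀) :=
        mul_le_mul_of_nonneg_left (le_trans hxσ hσ) (abs_nonneg _)
    _ = (2 * |vb i| / c₀) * (J + 12 * (δu + δv)) := by ring
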